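/- For k = 1,…,K-1, the eigenvector s_k with nodal part s_{k,j} = sin(πkj/K) and element part s_{k,j-1/2} = p sin(πk(j-1)/K) + p̌ sin(πkj/K) has squared 𝒞-norm ‖s_k‖_𝒞² = K(b_0 + b_n cos(πk/K)), where b_0 = c_0 + (C̃p + 2c)·p and b_n = c_n + (C̃p + 2c)·p̌. -/

import Mathlib

open Matrix Real

/-- The flip (reversal) operator `P`: `(Pp)_l = p_{n-l}`. -/
def flipVec {m : ℕ} (v : Fin m → ℝ) : Fin m → ℝ := fun i => v i.rev

/-!
Since `C̃` commutes with the flip and `č = Pc`, every nodal and element contribution to the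
`𝒞`-norm of a mode `v_j = s_j`, `v_{j-1/2} = p s_{j-1} + p̌ s_j` is a combination of `s_j²` and
`s_j s_{j+1}` (with shifted indices). When `s_0 = s_K = 0` the shifted sums coincide, so
`‖v‖²_𝒞 = 2 b₀ Σ s_j² + 2 bₙ Σ s_j s_{j+1}`. For `s_j = sin (jα)`, `α = πk/K`, product-to-sum
reduces both sums to `K/2` resp. `(K/2) cos α` up to a sum `Σ cos (2jα + β)`, which vanishes:
multiplied by `2 sin α ≠ 0` it telescopes, and `sin (Kα) = 0`.
-/

open Finset

section FlipVec

variable {m : ℕ}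

@[simp]
lemma flipVec_flipVec (v : Fin m → ℝ) : flipVec (flipVec v) = v := by
  funext i
  simp [flipVec]

lemma flipVec_dotProduct (a b : Fin m → ℝ) : flipVec a ⬝ᵥ b = a ⬝ᵥ flipVec b :=
  Fintype.sum_bijective Fin.rev Fin.rev_bijective _ _ fun i => by simp [flipVec]

end FlipVec

section BoundarySums

variable {M : Type*} [AddCommMonoid M]

lemma sum_Icc_one_eq_sum_range_succ (f : ℕ → M) (n : ℕ) :
    ∑ j ∈ Icc 1 n, f j = ∑ j ∈ range n, f (j + 1) := by
  rw [range_eq_Ico, sum_Ico_add', ← Ico_add_one_right_eq_Icc, zero_add]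

lemma sum_Icc_one_sub_one_of_eq_zero {f : ℕ → M} {n : ℕ} (hf : f n = 0) :
    ∑ j ∈ Icc 1 (n - 1), f j = ∑ j ∈ Icc 1 n, f j := by
  rcases n with _ | n
  · rfl
  · rw [sum_Icc_succ_top (by omega), hf, add_zero, Nat.add_sub_cancel]

lemma sum_range_succ_shift_of_eq {G : Type*} [AddCancelCommMonoid G] {f : ℕ → G} {n : ℕ}
    (hf : f 0 = f n) :
    ∑ j ∈ range n, f (j + 1) = ∑ j ∈ range n, f j := by
  have h := (sum_range_succ' f n).symm.trans (sum_range_succ f n)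
  rwa [hf, add_left_inj] at h

end BoundarySums

section TrigSums

variable {α : ℝ} {K : ℕ}

lemma sum_range_cos_two_mul_add_eq_zero (hα : sin α ≠ 0) (hK : sin (K * α) = 0) (β : ℝ) :
    ∑ j ∈ range K, cos (2 * j * α + β) = 0 := by
  set g : ℕ → ℝ := fun j => sin ((2 * j - 1) * α + β)
  have htel : ∀ j : ℕ, 2 * sin α * cos (2 * j * α + β) = g (j + 1) - g j := by
    intro j
    rw [two_mul_sin_mul_cos]
    simp only [g]
    push_cast
    rw [show α - (2 * j * α + β) = -((2 * j - 1) * α + β) by ring, sin_neg,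
      show α + (2 * j * α + β) = (2 * (j + 1) - 1) * α + β by ring]
    ring
  have hper : g K = g 0 := by
    have h2K : sin (2 * (K * α)) = 0 := by rw [sin_two_mul, hK, mul_zero, zero_mul]
    have h2K' : cos (2 * (K * α)) = 1 := by
      rw [cos_two_mul', ← sin_sq_add_cos_sq (K * α), hK]
      ring
    simp only [g, Nat.cast_zero]
    rw [show (2 * (K : ℝ) - 1) * α + β = 2 * (K * α) + ((2 * 0 - 1) * α + β) by ring, sin_add,
      h2K, h2K']
    ring
  have h : 2 * sin α * ∑ j ∈ range K, cos (2 * j * α + β) = 0 := by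
    simp only [mul_sum, htel]
    rw [sum_range_sub, hper, sub_self]
  exact (mul_eq_zero.mp h).resolve_left (mul_ne_zero two_ne_zero hα)

lemma sum_range_sin_mul_sin (hα : sin α ≠ 0) (hK : sin (K * α) = 0) (m : ℕ) :
    ∑ j ∈ range K, sin (j * α) * sin ((j + m : ℕ) * α) = K / 2 * cos (m * α) := by
  have h : ∀ j : ℕ, sin (j * α) * sin ((j + m : ℕ) * α)
      = cos (m * α) / 2 - cos (2 * j * α + m * α) / 2 := by
    intro j
    have := two_mul_sin_mul_sin (j * α) ((j + m : ℕ) * α)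
    push_cast at this ⊢
    rw [show (j : ℝ) * α - (j + m) * α = -(m * α) by ring, cos_neg,
      show (j : ℝ) * α + (j + m) * α = 2 * j * α + m * α by ring] at this
    linarith
  rw [sum_congr rfl fun j _ => h j, sum_sub_distrib, ← sum_div, ← sum_div,
    sum_range_cos_two_mul_add_eq_zero hα hK, sum_const, card_range, nsmul_eq_mul]
  ring

end TrigSums

section Summands

variable {m : ℕ} (c p : Fin m → ℝ) (x₀ x₁ x₂ : ℝ)

lemma nodal_summand_eq (c₀ cₙ : ℝ) :
    (cₙ * x₀ + flipVec c ⬝ᵥ (x₀ • p + x₁ • flipVec p) + 2 * c₀ * x₁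
        + c ⬝ᵥ (x₁ • p + x₂ • flipVec p) + cₙ * x₂) * x₁
      = (cₙ + c ⬝ᵥ flipVec p) * (x₀ * x₁ + x₁ * x₂) + 2 * (c₀ + c ⬝ᵥ p) * x₁ ^ 2 := by
  simp only [dotProduct_add, dotProduct_smul, flipVec_dotProduct, flipVec_flipVec, smul_eq_mul]
  ring

lemma element_summand_eq (Ct : Matrix (Fin m) (Fin m) ℝ)
    (hCt : Ct *ᵥ flipVec p = flipVec (Ct *ᵥ p)) :
    (x₀ • c + Ct *ᵥ (x₀ • p + x₁ • flipVec p) + x₁ • flipVec c) ⬝ᵥ (x₀ • p + x₁ • flipVec p)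
      = (Ct *ᵥ p ⬝ᵥ p + c ⬝ᵥ p) * (x₀ ^ 2 + x₁ ^ 2)
        + 2 * (Ct *ᵥ p ⬝ᵥ flipVec p + c ⬝ᵥ flipVec p) * (x₀ * x₁) := by
  simp only [mulVec_add, mulVec_smul, hCt, add_dotProduct, dotProduct_add, smul_dotProduct,
    dotProduct_smul, flipVec_dotProduct, flipVec_flipVec, smul_eq_mul]
  ring

end Summands

/-- `vnode j` is the nodal value `v_j` and `velt j` the element block `v_{j-1/2}`; the two sums
are `Σ_j (𝒞v)_j v_j` and `Σ_j (𝒞v)_{j-1/2} ⬝ᵥ v_{j-1/2}`. -/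
def massNormSq {m : ℕ} (c₀ cₙ : ℝ) (c : Fin m → ℝ) (Ct : Matrix (Fin m) (Fin m) ℝ) (K : ℕ)
    (vnode : ℕ → ℝ) (velt : ℕ → Fin m → ℝ) : ℝ :=
  (∑ j ∈ Icc 1 (K - 1),
      (cₙ * vnode (j - 1) + flipVec c ⬝ᵥ velt j + 2 * c₀ * vnode j
        + c ⬝ᵥ velt (j + 1) + cₙ * vnode (j + 1)) * vnode j)
    + ∑ j ∈ Icc 1 K,
        (fun i => c i * vnode (j - 1) + Ct.mulVec (velt j) i + flipVec c i * vnode j) ⬝ᵥ velt j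

lemma massNormSq_eq_of_zero_boundary {m : ℕ} (c₀ cₙ : ℝ) (c p : Fin m → ℝ)
    (Ct : Matrix (Fin m) (Fin m) ℝ) (hCt : Ct *ᵥ flipVec p = flipVec (Ct *ᵥ p))
    {K : ℕ} (s : ℕ → ℝ) (hs₀ : s 0 = 0) (hsK : s K = 0) :
    massNormSq c₀ cₙ c Ct K s (fun j i => p i * s (j - 1) + flipVec p i * s j)
      = 2 * (c₀ + (Ct *ᵥ p + (2 : ℝ) • c) ⬝ᵥ p) * ∑ j ∈ range K, s j ^ 2
        + 2 * (cₙ + (Ct *ᵥ p + (2 : ℝ) • c) ⬝ᵥ flipVec p) * ∑ j ∈ range K, s j * s (j + 1) := by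
  have hmode : (fun j i => p i * s (j - 1) + flipVec p i * s j)
      = fun j => s (j - 1) • p + s j • flipVec p := by ext j i; simp [mul_comm]
  have helt : ∀ j, (fun i => c i * s (j - 1) + (Ct *ᵥ (s (j - 1) • p + s j • flipVec p)) i
      + flipVec c i * s j) = s (j - 1) • c + Ct *ᵥ (s (j - 1) • p + s j • flipVec p)
        + s j • flipVec c := fun j => by ext i; simp [mul_comm]
  rw [hmode]
  simp only [massNormSq, helt, nodal_summand_eq, element_summand_eq _ _ _ _ _ hCt,
    Nat.add_sub_cancel]
  have hsq : ∑ j ∈ Icc 1 K, s j ^ 2 = ∑ j ∈ range K, s j ^ 2 := by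
    rw [sum_Icc_one_eq_sum_range_succ, sum_range_succ_shift_of_eq (f := fun j => s j ^ 2)]
    simp [hs₀, hsK]
  have hsq_pred : ∑ j ∈ Icc 1 K, s (j - 1) ^ 2 = ∑ j ∈ range K, s j ^ 2 := by
    simp [sum_Icc_one_eq_sum_range_succ]
  have hmul_pred : ∑ j ∈ Icc 1 K, s (j - 1) * s j = ∑ j ∈ range K, s j * s (j + 1) := by
    simp [sum_Icc_one_eq_sum_range_succ]
  have hmul_succ : ∑ j ∈ Icc 1 K, s j * s (j + 1) = ∑ j ∈ range K, s j * s (j + 1) := by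
    rw [sum_Icc_one_eq_sum_range_succ,
      sum_range_succ_shift_of_eq (f := fun j => s j * s (j + 1)) (by simp [hs₀, hsK])]
  rw [sum_Icc_one_sub_one_of_eq_zero (by simp [hsK])]
  simp only [sum_add_distrib, ← mul_sum, mul_add, hsq, hsq_pred, hmul_pred, hmul_succ,
    add_dotProduct, smul_dotProduct]
  ring

theorem sine_eigenvector_C_norm_general (n K k : ℕ)
    (hk1 : 1 ≤ k) (hk2 : k ≤ K - 1)
    (c0 cn : ℝ) (c : Fin (n - 1) → ℝ)
    (Ct : Matrix (Fin (n - 1)) (Fin (n - 1)) ℝ)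
    (hsym : ∀ w, Ct.mulVec (flipVec w) = flipVec (Ct.mulVec w))
    (p : Fin (n - 1) → ℝ) :
    let vnode : ℕ → ℝ := fun j => Real.sin (π * k * j / K)
    let velt : ℕ → Fin (n - 1) → ℝ := fun j i =>
      p i * Real.sin (π * k * (j - 1 : ℕ) / K) + flipVec p i * Real.sin (π * k * j / K)
    let b0 : ℝ := c0 + (fun i => Ct.mulVec p i + 2 * c i) ⬝ᵥ p
    let bn : ℝ := cn + (fun i => Ct.mulVec p i + 2 * c i) ⬝ᵥ flipVec p
    (∑ j ∈ Finset.Icc 1 (K - 1),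
        (cn * vnode (j - 1) + flipVec c ⬝ᵥ velt j + 2 * c0 * vnode j
          + c ⬝ᵥ velt (j + 1) + cn * vnode (j + 1)) * vnode j)
      + ∑ j ∈ Finset.Icc 1 K,
          (fun i => c i * vnode (j - 1) + Ct.mulVec (velt j) i + flipVec c i * vnode j)
            ⬝ᵥ velt j
      = K * (b0 + bn * Real.cos (π * k / K)) := by
  intro vnode velt b0 bn
  have hK : (0 : ℝ) < K := by exact_mod_cast (show 0 < K by omega)
  have hvnode : ∀ j : ℕ, vnode j = sin (j * (π * k / K)) := fun j => by
    simp only [vnode]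
    ring_nf
  have hsin : sin (π * k / K) ≠ 0 := by
    refine (sin_pos_of_pos_of_lt_pi (by positivity) ?_).ne'
    rw [div_lt_iff₀ hK]
    have hkK : (k : ℝ) < K := by exact_mod_cast (show k < K by omega)
    nlinarith [pi_pos]
  have hsinK : sin (K * (π * k / K)) = 0 := by
    rw [show (K : ℝ) * (π * k / K) = k * π by field_simp]
    exact sin_nat_mul_pi k
  have hsq : ∑ j ∈ range K, vnode j ^ 2 = K / 2 := by
    simpa [hvnode, sq] using sum_range_sin_mul_sin hsin hsinK 0
  have hmul : ∑ j ∈ range K, vnode j * vnode (j + 1) = K / 2 * cos (π * k / K) := by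
    simpa [hvnode] using sum_range_sin_mul_sin hsin hsinK 1
  have hnorm := massNormSq_eq_of_zero_boundary c0 cn c p Ct (hsym p) (K := K) vnode
    (by simp [vnode]) (by rw [hvnode, hsinK])
  rw [hsq, hmul] at hnorm
  calc _ = 2 * b0 * (K / 2) + 2 * bn * (K / 2 * cos (π * k / K)) := hnorm
    _ = _ := by ring

/-- The squared `𝒞`-norm of the eigenvector `s_k` with nodal part `sin(πkj/K)` and
element part `p sin(πk(j-1)/K) + p̌ sin(πkj/K)` equals `K(b₀ + bₙ cos(πk/K))`, where
`b₀ = c₀ + (C̃p + 2c)·p` and `bₙ = cₙ + (C̃p + 2c)·p̌`.  The global mass operator `𝒞`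
is assembled from the blocks `c₀, cₙ, c, č = Pc, C̃` of the local mass matrix, with
`C̃` commuting with `P`. -/
theorem sine_eigenvector_C_norm (n K k : ℕ) (hn : 2 ≤ n) (hK : 2 ≤ K)
    (hk1 : 1 ≤ k) (hk2 : k ≤ K - 1)
    (c0 cn : ℝ) (c : Fin (n - 1) → ℝ)
    (Ct : Matrix (Fin (n - 1)) (Fin (n - 1)) ℝ)
    (hsym : ∀ w, Ct.mulVec (flipVec w) = flipVec (Ct.mulVec w))
    (p : Fin (n - 1) → ℝ) :
    let vnode : ℕ → ℝ := fun j => Real.sin (π * k * j / K)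
    let velt : ℕ → Fin (n - 1) → ℝ := fun j i =>
      p i * Real.sin (π * k * (j - 1 : ℕ) / K) + flipVec p i * Real.sin (π * k * j / K)
    let b0 : ℝ := c0 + (fun i => Ct.mulVec p i + 2 * c i) ⬝ᵥ p
    let bn : ℝ := cn + (fun i => Ct.mulVec p i + 2 * c i) ⬝ᵥ flipVec p
    (∑ j ∈ Finset.Icc 1 (K - 1),
        (cn * vnode (j - 1) + flipVec c ⬝ᵥ velt j + 2 * c0 * vnode j
          + c ⬝ᵥ velt (j + 1) + cn * vnode (j + 1)) * vnode j)
      + ∑ j ∈ Finset.Icc 1 K,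
          (fun i => c i * vnode (j - 1) + Ct.mulVec (velt j) i + flipVec c i * vnode j)
            ⬝ᵥ velt j
      = K * (b0 + bn * Real.cos (π * k / K)) :=
  sine_eigenvector_C_norm_general n K k hk1 hk2 c0 cn c Ct hsym p
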